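/- Let d = xy = x̃ỹ with gcd conditions as in the DFT setting, x = x̃p for a prime p | d. Denote by V_x and V_{x̃} the sets of KD-classical pure projections associated with the factorizations d = xy and d = x̃ỹ. Then span_ℝ(V_x ∪ V_{x̃}) contains, for every m, s̃, the operator ∑_{j ∈ Z_p} ψ_{m, s̃ + j·c} where c = p^{r_{(1,x)}-1}M_1N_1, and this operator also lies in span_ℝ(V_{x̃}); i.e., the two vertex spaces overlap exactly along these summed projections. -/

import Mathlib

open Finset Complex
open scoped ComplexOrder

/-- ω_n = e^{2πi/n} -/
noncomputable def ww (n : ℕ) : ℂ := Complex.exp (2 * Real.pi * Complex.I / n)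

/-- |ψ_{m,s}⟩ = (1/√x) ∑_{k<x} ω_x^{sk} |a_{ky+m}⟩ in ℂ^d (standard basis coords). -/
noncomputable def psi (d x y m s : ℕ) : Fin d → ℂ :=
  fun t => (1 / Real.sqrt x) *
    ∑ k ∈ Finset.range x, ww x ^ (s * k) * (if (t : ℕ) = k * y + m then 1 else 0)

/-- Fourier basis vector |b_j⟩, coordinates in the standard basis. -/
noncomputable def bvec (d j : ℕ) : Fin d → ℂ :=
  fun i => ww d ^ ((i : ℕ) * j) / Real.sqrt d

/-- rank one projection |v⟩⟨v| as a matrix. -/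
noncomputable def proj {d : ℕ} (v : Fin d → ℂ) : Matrix (Fin d) (Fin d) ℂ :=
  fun i j => v i * (starRingEnd ℂ) (v j)

/-- KD quasiprobability Q_{ij}(ρ) = ⟨a_i|ρ|b_j⟩⟨b_j|a_i⟩ (standard/Fourier bases). -/
noncomputable def KD {d : ℕ} (ρ : Matrix (Fin d) (Fin d) ℂ) (i j : Fin d) : ℂ :=
  (∑ l, ρ i l * bvec d (j : ℕ) l) * (starRingEnd ℂ) (bvec d (j : ℕ) i)

/-- The set of KD-classical pure-state projections for the DFT pair in dimension d. -/
def pureKD (d : ℕ) : Set (Matrix (Fin d) (Fin d) ℂ) :=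
  {M | ∃ x y m s : ℕ, x * y = d ∧ m < y ∧ s < x ∧ M = proj (psi d x y m s)}

/-- The set of KD-classical pure projections attached to the factorization d = x'·(d/x'). -/
def vertexSet (d x' : ℕ) : Set (Matrix (Fin d) (Fin d) ℂ) :=
  {M | ∃ m s : ℕ, m < d / x' ∧ s < x' ∧ M = proj (psi d x' (d / x') m s)}

/-!
Write `i = k * y + m` for the basis indices in the support of `ψ_{m,s}`. Since `ω_x ^ c` is a
primitive `p`-th root of unity, replacing `s` by `s + n * c` multiplies the `k`-th coordinate
of `ψ_{m,s}` by `(ω_x ^ c) ^ (n * k)`, so averaging the `p` shifted projections kills exactly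
the entries of `|ψ_{m,s}⟩⟨ψ_{m,s}|` joining blocks with different `k mod p`. On the other
hand, up to a phase and a factor `√p`, the vector `ψ_{l * y + m, s}` of the factorization
`d = (x / p) * (y * p)` is the restriction of `ψ_{m,s}` to the indices with `k ≡ l (mod p)`,
so the sum over `l` of their projections is `p` times the same block-diagonal part of
`|ψ_{m,s}⟩⟨ψ_{m,s}|`.
-/

lemma norm_ww (n : ℕ) : ‖ww n‖ = 1 := by
  rw [ww, show 2 * Real.pi * I / n = ((2 * Real.pi / n : ℝ) : ℂ) * I by push_cast; ring]
  exact norm_exp_ofReal_mul_I _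

lemma ww_pow_mul_conj (n k : ℕ) : ww n ^ k * starRingEnd ℂ (ww n ^ k) = 1 := by
  rw [mul_conj', norm_pow, norm_ww, one_pow, ofReal_one, one_pow]

lemma isPrimitiveRoot_ww {n : ℕ} (hn : n ≠ 0) : IsPrimitiveRoot (ww n) n :=
  isPrimitiveRoot_exp n hn

lemma ww_pow_self (n : ℕ) : ww n ^ n = 1 := by
  rcases eq_or_ne n 0 with rfl | hn
  · rfl
  · exact (isPrimitiveRoot_ww hn).pow_eq_one

lemma ww_mul_pow {a b : ℕ} (hb : b ≠ 0) : ww (a * b) ^ b = ww a := by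
  rcases eq_or_ne a 0 with rfl | ha
  · simp [ww]
  · rw [ww, ww, ← exp_nat_mul]
    congr 1
    field_simp
    push_cast
    ring

theorem IsPrimitiveRoot.sum_pow_mul_conj_pow {z : ℂ} {p : ℕ} (hz : IsPrimitiveRoot z p)
    (a b : ℕ) :
    ∑ n ∈ range p, z ^ (n * a) * starRingEnd ℂ (z ^ (n * b)) =
      if a ≡ b [MOD p] then (p : ℂ) else 0 := by
  rcases eq_or_ne p 0 with rfl | hp
  · simp
  set w := z ^ a * starRingEnd ℂ (z ^ b)
  have hterm (n : ℕ) : z ^ (n * a) * starRingEnd ℂ (z ^ (n * b)) = w ^ n := by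
    rw [mul_pow, ← pow_mul, ← map_pow, ← pow_mul, mul_comm a, mul_comm b]
  have hwp : w ^ p = 1 := by
    rw [← hterm, pow_mul, pow_mul, hz.pow_eq_one]
    simp
  have hconj : starRingEnd ℂ (z ^ b) * z ^ b = 1 := by
    rw [conj_mul', norm_pow, Complex.norm_eq_one_of_pow_eq_one hz.pow_eq_one hp]
    simp
  have hw : w = 1 ↔ a ≡ b [MOD p] := by
    rw [mul_eq_one_iff_eq_inv₀ (left_ne_zero_of_mul_eq_one hconj),
      inv_eq_of_mul_eq_one_right hconj, (hz.isOfFinOrder hp).pow_eq_pow_iff_modEq,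
      ← hz.eq_orderOf]
  simp_rw [hterm]
  split_ifs with h
  · simp [hw.2 h]
  · rw [geom_sum_eq (mt hw.1 h), hwp, sub_self, zero_div]

lemma eq_mul_add_iff_mod_eq_and_eq_div {i k y m : ℕ} (hm : m < y) :
    i = k * y + m ↔ i % y = m ∧ k = i / y := by
  constructor
  · rintro rfl
    rw [mul_comm, Nat.mul_add_mod, Nat.mul_add_div (by omega), Nat.mod_eq_of_lt hm,
      Nat.div_eq_of_lt hm]
    simp
  · rintro ⟨rfl, rfl⟩
    rw [mul_comm]
    exact (Nat.div_add_mod i y).symm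

lemma psi_apply {d x y m : ℕ} (hm : m < y) (s : ℕ) (i : Fin d) :
    psi d x y m s i = if (i : ℕ) % y = m ∧ (i : ℕ) / y < x then
      (Real.sqrt x : ℂ)⁻¹ * ww x ^ (s * (i / y)) else 0 := by
  simp only [psi, eq_mul_add_iff_mod_eq_and_eq_div hm, ite_and, mul_ite, mul_one, mul_zero]
  split_ifs <;> simp_all [Finset.sum_ite_eq']

lemma psi_mod (d x y m s : ℕ) : psi d x y m (s % x) = psi d x y m s := by
  ext i
  simp only [psi]
  congr 1
  refine Finset.sum_congr rfl fun k _ => ?_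
  rw [pow_eq_pow_mod _ (ww_pow_self x), pow_eq_pow_mod (s * k) (ww_pow_self x), Nat.mod_mul_mod]

lemma psi_add {d x y m : ℕ} (hm : m < y) (s t : ℕ) (i : Fin d) :
    psi d x y m (s + t) i = ww x ^ (t * (i / y)) * psi d x y m s i := by
  rw [psi_apply hm, psi_apply hm]
  split_ifs <;> ring

lemma add_mul_eq_mul_add_iff {r m q l y : ℕ} (hr : r < y) (hm : m < y) :
    r + y * q = l * y + m ↔ r = m ∧ q = l := by
  rw [eq_mul_add_iff_mod_eq_and_eq_div hm, Nat.add_mul_mod_self_left,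
    Nat.add_mul_div_left _ _ (by omega), Nat.mod_eq_of_lt hr, Nat.div_eq_of_lt hr, zero_add,
    eq_comm (a := l)]

lemma ww_pow_mul_psi_coarse_apply {d a p y m l : ℕ} (hm : m < y) (hl : l < p) (s : ℕ)
    (i : Fin d) :
    ww (a * p) ^ (s * l) * psi d a (y * p) (l * y + m) s i =
      if (i / y : ℕ) % p = l then (Real.sqrt p : ℂ) * psi d (a * p) y m s i else 0 := by
  have hp : 0 < p := by omega
  have hlm : l * y + m < y * p := by nlinarith
  simp only [psi_apply hlm, psi_apply hm, Nat.mod_mul, ← Nat.div_div_eq_div_mul,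
    add_mul_eq_mul_add_iff (Nat.mod_lt _ (by omega : 0 < y)) hm]
  obtain ⟨q, k, hk, hqk⟩ : ∃ q k, k < p ∧ (i : ℕ) / y = p * q + k :=
    ⟨_, _, Nat.mod_lt _ hp, (Nat.div_add_mod _ p).symm⟩
  simp only [hqk, Nat.mul_add_mod, Nat.mod_eq_of_lt hk, Nat.mul_add_div hp, Nat.div_eq_of_lt hk,
    add_zero]
  by_cases hkl : k = l
  · subst hkl
    have hlt : q < a ↔ p * q + k < a * p := by
      constructor <;> intro h <;> nlinarith
    simp only [and_true, if_true, hlt]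
    split_ifs
    · have hsp : (Real.sqrt p : ℂ) * (Real.sqrt p : ℂ)⁻¹ = 1 :=
        mul_inv_cancel₀ (by exact_mod_cast (Real.sqrt_pos.2 (by exact_mod_cast hp)).ne')
      rw [← ww_mul_pow (a := a) hp.ne', Nat.cast_mul, Real.sqrt_mul (Nat.cast_nonneg _),
        ofReal_mul, mul_inv]
      linear_combination (-(Real.sqrt a : ℂ)⁻¹ * ww (a * p) ^ (s * (p * q + k))) * hsp
    · simp
  · simp [hkl]

def pinch {d : ℕ} (y p : ℕ) (M : Matrix (Fin d) (Fin d) ℂ) : Matrix (Fin d) (Fin d) ℂ :=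
  Matrix.of fun i j => if (i / y : ℕ) ≡ (j / y : ℕ) [MOD p] then M i j else 0

lemma sum_proj_psi_add_mul_mod {d x y m c p : ℕ} (hm : m < y) (hz : IsPrimitiveRoot (ww x ^ c) p)
    (s : ℕ) :
    ∑ n ∈ range p, proj (psi d x y m ((s + n * c) % x)) =
      (p : ℂ) • pinch y p (proj (psi d x y m s)) := by
  ext i j
  have hterm (n : ℕ) : proj (psi d x y m (s + n * c)) i j =
      (ww x ^ c) ^ (n * (i / y)) * starRingEnd ℂ ((ww x ^ c) ^ (n * (j / y))) *
        proj (psi d x y m s) i j := by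
    simp only [proj, psi_add hm, map_mul, ← pow_mul]
    ring_nf
  simp only [Matrix.sum_apply, psi_mod, hterm, ← Finset.sum_mul, hz.sum_pow_mul_conj_pow,
    pinch, Matrix.smul_apply, Matrix.of_apply, smul_eq_mul]
  split_ifs <;> simp

lemma sum_proj_psi_mul_add {d a x y m p : ℕ} (hm : m < y) (hx : a * p = x) (s : ℕ) :
    ∑ l ∈ range p, proj (psi d a (y * p) (l * y + m) s) =
      (p : ℂ) • pinch y p (proj (psi d x y m s)) := by
  subst hx
  ext i j
  have hentry (l : ℕ) (hl : l < p) : proj (psi d a (y * p) (l * y + m) s) i j =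
      if (i / y : ℕ) % p = l ∧ (j / y : ℕ) % p = l then
        (p : ℂ) * proj (psi d (a * p) y m s) i j else 0 := by
    set ω := ww (a * p) ^ (s * l)
    calc proj (psi d a (y * p) (l * y + m) s) i j
        = ω * psi d a (y * p) (l * y + m) s i *
            starRingEnd ℂ (ω * psi d a (y * p) (l * y + m) s j) := by
          rw [proj, map_mul]
          linear_combination (-psi d a (y * p) (l * y + m) s i *
            starRingEnd ℂ (psi d a (y * p) (l * y + m) s j)) * ww_pow_mul_conj (a * p) (s * l)
      _ = _ := by
          rw [ww_pow_mul_psi_coarse_apply hm hl, ww_pow_mul_psi_coarse_apply hm hl]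
          have hsq : (Real.sqrt p : ℂ) * starRingEnd ℂ (Real.sqrt p : ℂ) = p := by
            rw [conj_ofReal, ← ofReal_mul, Real.mul_self_sqrt (Nat.cast_nonneg _), ofReal_natCast]
          split_ifs <;> simp only [proj, map_mul, map_zero, mul_zero, zero_mul] <;>
            first | tauto | linear_combination (psi d (a * p) y m s i *
              starRingEnd ℂ (psi d (a * p) y m s j)) * hsq
  rw [Matrix.sum_apply, Finset.sum_congr rfl fun l hl => hentry l (mem_range.1 hl)]
  simp only [ite_and, Finset.sum_ite_eq, pinch, Matrix.smul_apply, Matrix.of_apply, smul_eq_mul,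
    mem_range]
  rcases Nat.eq_zero_or_pos p with rfl | hp
  · simp
  rw [if_pos (Nat.mod_lt _ hp)]
  split_ifs <;> simp_all [Nat.ModEq, eq_comm]

lemma isPrimitiveRoot_ww_pow {a p k x : ℕ} (hx : a * p = x) (hx0 : x ≠ 0) (hk : k.Coprime p) :
    IsPrimitiveRoot (ww x ^ (a * k)) p := by
  rw [pow_mul]
  exact ((isPrimitiveRoot_ww hx0).pow (Nat.pos_of_ne_zero hx0) hx.symm).pow_of_coprime k hk

lemma exists_pow_pred_mul_eq_div_mul_coprime {p r1 rx M1 N1 x : ℕ} (hp : p.Prime)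
    (hrx : 1 ≤ rx) (hxdvd : p ^ rx ∣ x) (hxtop : ¬ p ∣ x / p ^ rx) (hx : x ∣ p ^ r1 * M1)
    (hM1 : ¬ p ∣ M1) (hN1 : M1 * N1 ≡ 1 [MOD p ^ r1]) :
    ∃ k, p ^ (rx - 1) * M1 * N1 = x / p * k ∧ k.Coprime p := by
  obtain ⟨r, rfl⟩ : ∃ r, rx = r + 1 := ⟨rx - 1, by omega⟩
  obtain ⟨u, rfl⟩ := hxdvd
  rw [Nat.mul_div_cancel_left _ (pow_pos hp.pos _)] at hxtop
  have hr1 : r1 ≠ 0 := by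
    rintro rfl
    exact hM1 ((dvd_mul_of_dvd_left (dvd_pow_self p r.succ_ne_zero) u).trans (by simpa using hx))
  obtain ⟨w, rfl⟩ : u ∣ M1 :=
    ((hp.coprime_iff_not_dvd.2 hxtop).symm.pow_right r1).dvd_of_dvd_mul_left
      ((dvd_mul_left u _).trans hx)
  have hMN : (u * w * N1).Coprime p :=
    ((hN1.of_dvd (dvd_pow_self p hr1)).gcd_eq).trans (Nat.gcd_one_left p)
  refine ⟨w * N1, ?_, hMN.coprime_dvd_left ⟨u, by ring⟩⟩
  have hxp : p ^ (r + 1) * u / p = p ^ r * u := by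
    rw [pow_succ, mul_right_comm, Nat.mul_div_cancel _ hp.pos]
  rw [hxp, Nat.add_sub_cancel]
  ring

lemma proj_psi_mem_vertexSet {d x y m s : ℕ} (hd : d = x * y) (hm : m < y) (hs : s < x) :
    proj (psi d x y m s) ∈ vertexSet d x := by
  have hdx : d / x = y := by rw [hd, Nat.mul_div_cancel_left _ (by omega)]
  exact ⟨m, s, hdx ▸ hm, hs, hdx ▸ rfl⟩

theorem summed_projection_in_spans_general (d x y p r1 rx M1 N1 m st : ℕ)
    (hp : p.Prime) (hd : d = x * y)
    (hr1 : d = p ^ r1 * M1) (hM1 : ¬ p ∣ M1)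
    (hrx : 1 ≤ rx) (hxdvd : p ^ rx ∣ x) (hxtop : ¬ p ∣ x / p ^ rx)
    (hN1 : M1 * N1 % p ^ r1 = 1 % p ^ r1)
    (hm : m < y) (hst : st < x / p) :
    (∑ j ∈ Finset.range p,
        proj (psi d x y m ((st + j * (p ^ (rx - 1) * M1 * N1)) % x)))
      ∈ Submodule.span ℝ (vertexSet d x ∪ vertexSet d (x / p)) ∧
    (∑ j ∈ Finset.range p,
        proj (psi d x y m ((st + j * (p ^ (rx - 1) * M1 * N1)) % x)))
      ∈ Submodule.span ℝ (vertexSet d (x / p)) := by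
  have hxp : x / p * p = x := Nat.div_mul_cancel ((dvd_pow_self p (by omega)).trans hxdvd)
  have hx : x ≠ 0 := by
    rintro rfl
    simp at hst
  obtain ⟨k, hc, hk⟩ := exists_pow_pred_mul_eq_div_mul_coprime hp hrx hxdvd hxtop
    (hr1 ▸ hd ▸ dvd_mul_right x y) hM1 hN1
  have hz : IsPrimitiveRoot (ww x ^ (p ^ (rx - 1) * M1 * N1)) p :=
    hc ▸ isPrimitiveRoot_ww_pow hxp hx hk
  rw [sum_proj_psi_add_mul_mod hm hz, ← sum_proj_psi_mul_add hm hxp]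
  have hmem : ∑ l ∈ range p, proj (psi d (x / p) (y * p) (l * y + m) st) ∈
      Submodule.span ℝ (vertexSet d (x / p)) :=
    Submodule.sum_mem _ fun l hl => Submodule.subset_span <| proj_psi_mem_vertexSet
      (by rw [hd, mul_comm y, ← mul_assoc, hxp]) (by nlinarith [mem_range.1 hl]) hst
  exact ⟨Submodule.span_mono Set.subset_union_right hmem, hmem⟩

/-- with d = xy = x̃ỹ, x = x̃p, the operator T = ∑_{j∈Z_p} ψ_{m, s̃+j·c},
    c = p^{r_{(1,x)}-1}M₁N₁, lies in span_ℝ(V_x ∪ V_{x̃}) and also in span_ℝ(V_{x̃}). -/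
theorem summed_projection_in_spans (d x y p r1 rx M1 N1 m st : ℕ)
    (hp : p.Prime) (hd : d = x * y) (hx : 0 < x) (hy : 0 < y)
    (hr1 : d = p ^ r1 * M1) (hM1 : ¬ p ∣ M1)
    (hrx : 1 ≤ rx) (hxdvd : p ^ rx ∣ x) (hxtop : ¬ p ∣ x / p ^ rx)
    (hN1 : M1 * N1 % p ^ r1 = 1 % p ^ r1)
    (hm : m < y) (hst : st < x / p) :
    (∑ j ∈ Finset.range p,
        proj (psi d x y m ((st + j * (p ^ (rx - 1) * M1 * N1)) % x)))
      ∈ Submodule.span ℝ (vertexSet d x ∪ vertexSet d (x / p)) ∧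
    (∑ j ∈ Finset.range p,
        proj (psi d x y m ((st + j * (p ^ (rx - 1) * M1 * N1)) % x)))
      ∈ Submodule.span ℝ (vertexSet d (x / p)) :=
  summed_projection_in_spans_general d x y p r1 rx M1 N1 m st hp hd hr1 hM1 hrx hxdvd hxtop hN1 hm
    hst
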